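/- Let Θ be the k-dimensional probability simplex, f : Θ → ℝ bounded continuous, and M a set of probability densities on Θ with lower expectation E̲(f) := inf_{p∈M} ∫ f p dθ = f_min := inf_Θ f. Let L be bounded, nonnegative, measurable, strictly positive at each minimizer of f and continuous in a neighborhood of each minimizer. Then E̲(f | data) := inf_{p∈M} (∫ f L p dθ)/(∫ L p dθ) = f_min. -/

import Mathlib

open MeasureTheory Set Filter Topology

/-!
Since `f ≥ f_min` on the simplex, no posterior expectation falls below `f_min`. Conversely,
compactness of the simplex and positivity and continuity of `L` at the minimizers of `f` give
`c, δ > 0` with `L ≥ c` wherever `f < f_min + δ`. If a prior `p` has `E_p f - f_min = η ≤ δ / 2`,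
Markov's inequality puts at least half of its mass where `L ≥ c`, so the normalizer `∫ L p` is at
least `c / 2`, while `∫ (f - f_min) L p ≤ B η` for a bound `B` of `L`. Hence the posterior
expectation lies within `2 B η / c` of `f_min`, and the hypothesis on the prior lets `η → 0`.
-/

section Compact

variable {X : Type*} [TopologicalSpace X] {S : Set X} {f L : X → ℝ} {m : ℝ}

theorem IsCompact.exists_pos_forall_lt_add_mem {W : Set X} (hS : IsCompact S)
    (hf : ContinuousOn f S) (hW : IsOpen W) (hSW : ∀ x ∈ S, f x ≤ m → x ∈ W) :
    ∃ δ > 0, ∀ x ∈ S, f x < m + δ → x ∈ W := by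
  obtain ⟨a, hma, ha⟩ := (hS.diff hW).exists_forall_le' (hf.mono sdiff_subset) (a := m)
    fun x hx => lt_of_not_ge fun h => hx.2 (hSW x hx.1 h)
  refine ⟨a - m, sub_pos.2 hma, fun x hx hfx => ?_⟩
  by_contra hxW
  linarith [ha x ⟨hx, hxW⟩]

theorem IsCompact.exists_pos_forall_lt_add_le (hS : IsCompact S) (hSc : IsClosed S)
    (hf : ContinuousOn f S) (hLpos : ∀ x ∈ S, f x ≤ m → 0 < L x)
    (hLcont : ∀ x ∈ S, f x ≤ m → ContinuousAt L x) :
    ∃ c > 0, ∃ δ > 0, ∀ x ∈ S, f x < m + δ → c ≤ L x := by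
  set K := S ∩ f ⁻¹' Iic m
  have hK : IsCompact K :=
    hS.of_isClosed_subset (hf.preimage_isClosed_of_isClosed hSc isClosed_Iic) inter_subset_left
  obtain ⟨c, hc, hcL⟩ := hK.exists_forall_le'
    (continuousOn_of_forall_continuousAt fun x hx => hLcont x hx.1 hx.2) (a := 0)
    fun x hx => hLpos x hx.1 hx.2
  have hKW : ∀ x ∈ S, f x ≤ m → x ∈ interior {y | c / 2 < L y} := fun x hx hfx =>
    mem_interior_iff_mem_nhds.2 <| (hLcont x hx hfx).preimage_mem_nhds <|
      Ioi_mem_nhds <| (half_lt_self hc).trans_le (hcL x ⟨hx, hfx⟩)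
  obtain ⟨δ, hδ, hδW⟩ := hS.exists_pos_forall_lt_add_mem hf isOpen_interior hKW
  exact ⟨c / 2, half_pos hc, δ, hδ, fun x hx hfx => (interior_subset (hδW x hx hfx)).le⟩

end Compact

theorem csInf_image_eq_of_le_add_mul {ι : Type*} {M A : Set ι} {E g : ι → ℝ} {m δ K : ℝ}
    (hM : M.Nonempty) (hE : sInf (E '' M) = m) (hδ : 0 < δ) (hK : 0 ≤ K)
    (hgA : ∀ p ∈ A, m ≤ g p)
    (hclose : ∀ p ∈ M, E p < m + δ → p ∈ A ∧ g p ≤ m + K * (E p - m)) :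
    sInf (g '' A) = m := by
  have hnear : ∀ η > 0, ∃ p ∈ M, E p < m + η := fun η hη => by
    obtain ⟨_, ⟨p, hp, rfl⟩, hlt⟩ :=
      exists_lt_of_csInf_lt (hM.image E) (by linarith : sInf (E '' M) < m + η)
    exact ⟨p, hp, hlt⟩
  obtain ⟨p₀, hp₀, hp₀δ⟩ := hnear δ hδ
  refine csInf_eq_of_forall_ge_of_forall_gt_exists_lt
    ⟨_, mem_image_of_mem g (hclose p₀ hp₀ hp₀δ).1⟩ (forall_mem_image.2 hgA) fun w hw => ?_
  set η := (w - m) / (K + 1)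
  have hη : 0 < η := div_pos (sub_pos.2 hw) (by linarith)
  have hKη : K * η < w - m := by
    have : (K + 1) * η = w - m := mul_div_cancel₀ _ (by linarith)
    linarith
  obtain ⟨p, hp, hpη⟩ := hnear (min δ η) (lt_min hδ hη)
  obtain ⟨hpA, hgp⟩ := hclose p hp (hpη.trans_le (by gcongr; exact min_le_left _ _))
  refine ⟨g p, mem_image_of_mem g hpA, hgp.trans_lt ?_⟩
  have : K * (E p - m) ≤ K * η := by
    gcongr
    linarith [min_le_right δ η]
  linarith

section Density

variable {X : Type*} [MeasurableSpace X] {μ : Measure X} {S : Set X} {f L p : X → ℝ}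
  {m B c δ : ℝ}

def IsProbDensity (μ : Measure X) (p : X → ℝ) : Prop :=
  (∀ x, 0 ≤ p x) ∧ Integrable p μ ∧ ∫ x, p x ∂μ = 1

theorem const_mul_integral_le_integral_mul {g : X → ℝ} (hS : ∀ᵐ x ∂μ, x ∈ S)
    (hg : Integrable g μ) (hfg : Integrable (fun x => f x * g x) μ)
    (hmf : ∀ x ∈ S, m ≤ f x) (hg0 : ∀ x ∈ S, 0 ≤ g x) :
    m * ∫ x, g x ∂μ ≤ ∫ x, f x * g x ∂μ := by
  rw [← integral_const_mul]
  refine integral_mono_ae (hg.const_mul m) hfg ?_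
  filter_upwards [hS] with x hx using mul_le_mul_of_nonneg_right (hmf x hx) (hg0 x hx)

theorem integrable_mul_of_continuousOn [TopologicalSpace X] [OpensMeasurableSpace X] {B : ℝ}
    (hS : IsCompact S) (hSc : IsClosed S) (hsupp : ∀ᵐ x ∂μ, x ∈ S) (hf : ContinuousOn f S)
    (hLm : Measurable L) (hLB : ∀ x ∈ S, ‖L x‖ ≤ B) (hp : Integrable p μ) :
    Integrable (fun x => f x * p x) μ ∧ Integrable (fun x => L x * p x) μ ∧
      Integrable (fun x => f x * L x * p x) μ := by
  obtain ⟨F, hF⟩ := hS.exists_bound_of_continuousOn hf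
  have hfμ : AEStronglyMeasurable f μ :=
    Measure.restrict_eq_self_of_ae_mem hsupp ▸ hf.aestronglyMeasurable hSc.measurableSet
  have hLp := hp.bdd_mul hLm.aestronglyMeasurable (hsupp.mono hLB)
  exact ⟨hp.bdd_mul hfμ (hsupp.mono hF), hLp,
    by simpa only [mul_assoc] using hLp.bdd_mul hfμ (hsupp.mono hF)⟩

namespace IsProbDensity

theorem le_integral_mul (hp : IsProbDensity μ p) (hS : ∀ᵐ x ∂μ, x ∈ S)
    (hfp : Integrable (fun x => f x * p x) μ) (hmf : ∀ x ∈ S, m ≤ f x) :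
    m ≤ ∫ x, f x * p x ∂μ := by
  simpa only [hp.2.2, mul_one] using
    const_mul_integral_le_integral_mul hS hp.2.1 hfp hmf fun x _ => hp.1 x

theorem mul_integral_le_integral_mul_mul (hp : IsProbDensity μ p) (hS : ∀ᵐ x ∂μ, x ∈ S)
    (hLp : Integrable (fun x => L x * p x) μ) (hfLp : Integrable (fun x => f x * L x * p x) μ)
    (hmf : ∀ x ∈ S, m ≤ f x) (hL0 : ∀ x ∈ S, 0 ≤ L x) :
    m * ∫ x, L x * p x ∂μ ≤ ∫ x, f x * L x * p x ∂μ := by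
  simp only [mul_assoc] at hfLp ⊢
  exact const_mul_integral_le_integral_mul hS hLp hfLp hmf fun x hx =>
    mul_nonneg (hL0 x hx) (hp.1 x)

theorem integral_mul_mul_le (hp : IsProbDensity μ p) (hS : ∀ᵐ x ∂μ, x ∈ S)
    (hfp : Integrable (fun x => f x * p x) μ) (hLp : Integrable (fun x => L x * p x) μ)
    (hfLp : Integrable (fun x => f x * L x * p x) μ)
    (hmf : ∀ x ∈ S, m ≤ f x) (hLB : ∀ x ∈ S, L x ≤ B) :
    ∫ x, f x * L x * p x ∂μ ≤ m * ∫ x, L x * p x ∂μ + B * (∫ x, f x * p x ∂μ - m) := by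
  obtain ⟨hp0, hpi, hp1⟩ := hp
  have hmajor : Integrable (fun x => m * (L x * p x) + B * (f x * p x)) μ :=
    (hLp.const_mul m).add (hfp.const_mul B)
  have hbound : ∫ x, (m * (L x * p x) + B * (f x * p x) - B * m * p x) ∂μ =
      m * ∫ x, L x * p x ∂μ + B * (∫ x, f x * p x ∂μ - m) := by
    rw [integral_sub hmajor (hpi.const_mul _), integral_add (hLp.const_mul m) (hfp.const_mul B),
      integral_const_mul, integral_const_mul, integral_const_mul, hp1]
    ring
  rw [← hbound]
  refine integral_mono_ae hfLp (hmajor.sub (hpi.const_mul _)) ?_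
  filter_upwards [hS] with x hx
  nlinarith [mul_nonneg (mul_nonneg (sub_nonneg.2 (hmf x hx)) (hp0 x)) (sub_nonneg.2 (hLB x hx))]

-- Pointwise on `S`, `L ≥ c * (1 - (f - m) / δ)`.
theorem sub_div_mul_le_integral_mul (hp : IsProbDensity μ p) (hS : ∀ᵐ x ∂μ, x ∈ S)
    (hfp : Integrable (fun x => f x * p x) μ) (hLp : Integrable (fun x => L x * p x) μ)
    (hmf : ∀ x ∈ S, m ≤ f x) (hL0 : ∀ x ∈ S, 0 ≤ L x) (hc : 0 ≤ c) (hδ : 0 < δ)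
    (hLc : ∀ x ∈ S, f x < m + δ → c ≤ L x) :
    c - c / δ * (∫ x, f x * p x ∂μ - m) ≤ ∫ x, L x * p x ∂μ := by
  obtain ⟨hp0, hpi, hp1⟩ := hp
  have hcδ : 0 ≤ c / δ := div_nonneg hc hδ.le
  have hminor : Integrable (fun x => c * p x - c / δ * (f x * p x)) μ :=
    (hpi.const_mul c).sub (hfp.const_mul _)
  have hbound : ∫ x, (c * p x - c / δ * (f x * p x) + c / δ * m * p x) ∂μ =
      c - c / δ * (∫ x, f x * p x ∂μ - m) := by
    rw [integral_add hminor (hpi.const_mul _), integral_sub (hpi.const_mul c) (hfp.const_mul _),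
      integral_const_mul, integral_const_mul, integral_const_mul, hp1]
    ring
  rw [← hbound]
  refine integral_mono_ae (hminor.add (hpi.const_mul _)) hLp ?_
  filter_upwards [hS] with x hx
  have hexcess : 0 ≤ c / δ * ((f x - m) * p x) :=
    mul_nonneg hcδ (mul_nonneg (sub_nonneg.2 (hmf x hx)) (hp0 x))
  by_cases hfx : f x < m + δ
  · nlinarith [mul_le_mul_of_nonneg_right (hLc x hx hfx) (hp0 x)]
  · have : c ≤ c / δ * (f x - m) := by
      rw [div_mul_eq_mul_div, le_div_iff₀ hδ]
      nlinarith
    nlinarith [mul_nonneg (hL0 x hx) (hp0 x), mul_le_mul_of_nonneg_right this (hp0 x)]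

theorem integral_mul_mul_div_le (hp : IsProbDensity μ p) (hS : ∀ᵐ x ∂μ, x ∈ S)
    (hfp : Integrable (fun x => f x * p x) μ) (hLp : Integrable (fun x => L x * p x) μ)
    (hfLp : Integrable (fun x => f x * L x * p x) μ)
    (hmf : ∀ x ∈ S, m ≤ f x) (hL0 : ∀ x ∈ S, 0 ≤ L x) (hLB : ∀ x ∈ S, L x ≤ B) (hB : 0 ≤ B)
    (hc : 0 < c) (hδ : 0 < δ) (hLc : ∀ x ∈ S, f x < m + δ → c ≤ L x)
    (hnear : ∫ x, f x * p x ∂μ < m + δ / 2) :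
    0 < ∫ x, L x * p x ∂μ ∧ (∫ x, f x * L x * p x ∂μ) / ∫ x, L x * p x ∂μ ≤
      m + 2 * B / c * (∫ x, f x * p x ∂μ - m) := by
  have hE := hp.le_integral_mul hS hfp hmf
  have hden : c / 2 ≤ ∫ x, L x * p x ∂μ := by
    have h := hp.sub_div_mul_le_integral_mul hS hfp hLp hmf hL0 hc.le hδ hLc
    have : c / δ * (∫ x, f x * p x ∂μ - m) ≤ c / δ * (δ / 2) := by gcongr; linarith
    rw [show c / δ * (δ / 2) = c / 2 by field_simp] at this
    linarith
  have hpos : 0 < ∫ x, L x * p x ∂μ := by linarith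
  refine ⟨hpos, ?_⟩
  have hexcess : B * (∫ x, f x * p x ∂μ - m) ≤
      2 * B / c * (∫ x, f x * p x ∂μ - m) * ∫ x, L x * p x ∂μ :=
    calc B * (∫ x, f x * p x ∂μ - m) = 2 * B / c * (∫ x, f x * p x ∂μ - m) * (c / 2) := by
          field_simp
      _ ≤ _ := by gcongr
  rw [div_le_iff₀ hpos]
  linarith [hp.integral_mul_mul_le hS hfp hLp hfLp hmf hLB]

end IsProbDensity

end Density

theorem stmt_6_general (k : ℕ)
    (μ : Measure (Fin k → ℝ))
    (hsupp : ∀ᵐ θ ∂μ, θ ∈ stdSimplex ℝ (Fin k))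
    (M : Set ((Fin k → ℝ) → ℝ))
    (hM : ∀ p ∈ M, (∀ θ, 0 ≤ p θ) ∧ Integrable p μ ∧ ∫ θ, p θ ∂μ = 1)
    (f : (Fin k → ℝ) → ℝ) (hf : ContinuousOn f (stdSimplex ℝ (Fin k)))
    (fmin : ℝ) (hfmin : fmin = sInf (f '' stdSimplex ℝ (Fin k)))
    (hprior : sInf ((fun p => ∫ θ, f θ * p θ ∂μ) '' M) = fmin)
    (L : (Fin k → ℝ) → ℝ) (hLm : Measurable L)
    (hL0 : ∀ θ ∈ stdSimplex ℝ (Fin k), 0 ≤ L θ)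
    (hLb : BddAbove (L '' stdSimplex ℝ (Fin k)))
    (hLpos : ∀ θ ∈ stdSimplex ℝ (Fin k), f θ = fmin → 0 < L θ)
    (hLcont : ∀ θ ∈ stdSimplex ℝ (Fin k), f θ = fmin → ∃ U ∈ 𝓝 θ, ContinuousOn L U) :
    sInf ((fun p => (∫ θ, f θ * L θ * p θ ∂μ) / ∫ θ, L θ * p θ ∂μ) ''
        {p ∈ M | 0 < ∫ θ, L θ * p θ ∂μ}) = fmin := by
  rcases M.eq_empty_or_nonempty with rfl | hMne
  · simpa using hprior -- `sInf ∅ = 0` on both sides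
  set S := stdSimplex ℝ (Fin k)
  have hS : IsCompact S := isCompact_stdSimplex ℝ (Fin k)
  have hSc : IsClosed S := isClosed_stdSimplex ℝ (Fin k)
  have hmf : ∀ θ ∈ S, fmin ≤ f θ := fun θ hθ =>
    hfmin ▸ csInf_le (hS.bddBelow_image hf) (mem_image_of_mem f hθ)
  obtain ⟨c, hc, δ, hδ, hLc⟩ := hS.exists_pos_forall_lt_add_le hSc hf
    (fun θ hθ h => hLpos θ hθ (le_antisymm h (hmf θ hθ)))
    (fun θ hθ h => let ⟨U, hU, hLU⟩ := hLcont θ hθ (le_antisymm h (hmf θ hθ)); hLU.continuousAt hU)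
  obtain ⟨B, hB0, hLB⟩ : ∃ B, 0 ≤ B ∧ ∀ θ ∈ S, L θ ≤ B :=
    let ⟨B, hB⟩ := hLb
    ⟨max B 0, le_max_right _ _, fun θ hθ => (hB ⟨θ, hθ, rfl⟩).trans (le_max_left _ _)⟩
  have hint := fun p hp => integrable_mul_of_continuousOn hS hSc hsupp hf hLm
    (fun θ hθ => (Real.norm_of_nonneg (hL0 θ hθ)).trans_le (hLB θ hθ)) (hM p hp).2.1
  refine csInf_image_eq_of_le_add_mul hMne hprior (half_pos hδ) (by positivity : 0 ≤ 2 * B / c)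
    ?_ fun p hp hnear => ?_
  · rintro p ⟨hp, hden⟩
    rw [le_div_iff₀ hden]
    exact IsProbDensity.mul_integral_le_integral_mul_mul (hM p hp) hsupp (hint p hp).2.1
      (hint p hp).2.2 hmf hL0
  · obtain ⟨hfp, hLp, hfLp⟩ := hint p hp
    obtain ⟨hden, hle⟩ := IsProbDensity.integral_mul_mul_div_le (hM p hp) hsupp hfp hLp hfLp
      hmf hL0 hLB hB0 hc hδ hLc hnear
    exact ⟨⟨hp, hden⟩, hle⟩

/-- Vacuity of the posterior lower expectation: if the prior lower expectation of `f`
over the set of densities `M` on the simplex is the vacuous value `f_min`, and the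
likelihood `L` is bounded, nonnegative, measurable, strictly positive at each minimizer
of `f` and continuous near each minimizer, then the posterior lower expectation
(over densities with positive normalizer) is still `f_min`. -/
theorem stmt_6 (k : ℕ) (hk : 0 < k)
    (μ : Measure (Fin k → ℝ))
    (hsupp : ∀ᵐ θ ∂μ, θ ∈ stdSimplex ℝ (Fin k))
    (M : Set ((Fin k → ℝ) → ℝ))
    (hM : ∀ p ∈ M, (∀ θ, 0 ≤ p θ) ∧ Integrable p μ ∧ ∫ θ, p θ ∂μ = 1)
    (f : (Fin k → ℝ) → ℝ) (hf : ContinuousOn f (stdSimplex ℝ (Fin k)))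
    (fmin : ℝ) (hfmin : fmin = sInf (f '' stdSimplex ℝ (Fin k)))
    (hprior : sInf ((fun p => ∫ θ, f θ * p θ ∂μ) '' M) = fmin)
    (L : (Fin k → ℝ) → ℝ) (hLm : Measurable L)
    (hL0 : ∀ θ ∈ stdSimplex ℝ (Fin k), 0 ≤ L θ)
    (hLb : BddAbove (L '' stdSimplex ℝ (Fin k)))
    (hLpos : ∀ θ ∈ stdSimplex ℝ (Fin k), f θ = fmin → 0 < L θ)
    (hLcont : ∀ θ ∈ stdSimplex ℝ (Fin k), f θ = fmin → ∃ U ∈ 𝓝 θ, ContinuousOn L U) :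
    sInf ((fun p => (∫ θ, f θ * L θ * p θ ∂μ) / ∫ θ, L θ * p θ ∂μ) ''
        {p ∈ M | 0 < ∫ θ, L θ * p θ ∂μ}) = fmin :=
  stmt_6_general k μ hsupp M hM f hf fmin hfmin hprior L hLm hL0 hLb hLpos hLcont
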